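/- arXiv:1912.06854 — 2 statements merged into one kernel-verified Lean document; each statement's English description precedes it below -/
import Mathlib

section
/- If a 3-tensor T ∈ ℂ^m ⊗ ℂ^n ⊗ ℂ^p has a decomposition T = Σ_{i=1}^r x_i ⊗ y_i ⊗ z_i such that the matrices x_1⊗y_1, …, x_r⊗y_r are linearly independent and the vectors z_1, …, z_r are linearly independent, then rank(T) = r. -/
/-- The rank of a 3-mode tensor over `ℂ`: the minimal number of decomposable
(rank-one) tensors summing to it. -/
noncomputable def rank3 {m n p : ℕ} (T : Fin m → Fin n → Fin p → ℂ) : ℕ :=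
  sInf {r : ℕ | ∃ (x : Fin r → Fin m → ℂ) (y : Fin r → Fin n → ℂ) (z : Fin r → Fin p → ℂ),
    ∀ i j k, T i j k = ∑ l, x l i * y l j * z l k}

open Submodule in
/-- Lower-bound lemma: any other decomposition of `T` with `r'` terms forces `r ≤ r'`. -/
lemma rank3_aux_lower {m n p r r' : ℕ} (T : Fin m → Fin n → Fin p → ℂ)
    (x : Fin r → Fin m → ℂ) (y : Fin r → Fin n → ℂ) (z : Fin r → Fin p → ℂ)
    (hdec : ∀ i j k, T i j k = ∑ l, x l i * y l j * z l k)
    (hxy : LinearIndependent ℂ (fun l : Fin r => Matrix.vecMulVec (x l) (y l)))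
    (hz : LinearIndependent ℂ z)
    (a : Fin r' → Fin m → ℂ) (b : Fin r' → Fin n → ℂ) (c : Fin r' → Fin p → ℂ)
    (hdec' : ∀ i j k, T i j k = ∑ l, a l i * b l j * c l k) : r ≤ r' := by
  classical
  set X : Fin r → Matrix (Fin m) (Fin n) ℂ := fun l => Matrix.vecMulVec (x l) (y l) with hX
  set Y : Fin r' → Matrix (Fin m) (Fin n) ℂ := fun l => Matrix.vecMulVec (a l) (b l) with hY
  set slice : Fin p → Matrix (Fin m) (Fin n) ℂ := fun k => Matrix.of (fun i j => T i j k)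
  -- a left inverse for the "combination of z's" map
  let ψ : (Fin r → ℂ) →ₗ[ℂ] (Fin p → ℂ) :=
    { toFun := fun u => ∑ l, u l • z l
      map_add' := by
        intro u v
        simp [add_smul, Finset.sum_add_distrib]
      map_smul' := by
        intro s u
        simp [smul_smul, Finset.smul_sum] }
  have hψker : LinearMap.ker ψ = ⊥ := by
    rw [LinearMap.ker_eq_bot']
    intro u hu
    funext l
    exact (Fintype.linearIndependent_iff.mp hz u hu) l
  obtain ⟨g, hg⟩ := ψ.exists_leftInverse_of_injective hψker
  -- coefficients recovering the `X l` from the slices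
  set A : Fin r → Fin p → ℂ := fun l k => g (fun j => if k = j then (1:ℂ) else 0) l with hA
  have hgz : ∀ l', g (z l') = (Pi.single l' 1 : Fin r → ℂ) := by
    intro l'
    have h1 : ψ ((Pi.single l' 1 : Fin r → ℂ)) = z l' := by
      have : ψ ((Pi.single l' 1 : Fin r → ℂ)) = ∑ l, (Pi.single l' 1 : Fin r → ℂ) l • z l := rfl
      rw [this, Finset.sum_eq_single l']
      · simp
      · intro i _ hi; simp [Pi.single_apply, hi]
      · simp
    have := LinearMap.congr_fun hg ((Pi.single l' 1 : Fin r → ℂ))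
    simpa [h1] using this
  have hdual : ∀ l l', (∑ k, z l' k * A l k) = (Pi.single l' 1 : Fin r → ℂ) l := by
    intro l l'
    have := congr_fun ((LinearMap.pi_apply_eq_sum_univ g (z l')).symm.trans (hgz l')) l
    simpa [hA, Finset.sum_apply, mul_comm] using this
  -- each X l lies in the span of the slices
  have hXslice : ∀ l, X l = ∑ k, A l k • slice k := by
    intro l
    ext i j
    have lhs : X l i j = x l i * y l j := Matrix.vecMulVec_apply _ _ _ _
    have rhs : (∑ k, A l k • slice k) i j = ∑ k, A l k * T i j k := by
      simp [slice, Matrix.sum_apply]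
    rw [lhs, rhs]; symm
    calc ∑ k, A l k * T i j k
        = ∑ k, ∑ l', A l k * (x l' i * y l' j * z l' k) := by
          refine Finset.sum_congr rfl fun k _ => ?_
          rw [hdec, Finset.mul_sum]
      _ = ∑ l', ∑ k, A l k * (x l' i * y l' j * z l' k) := Finset.sum_comm
      _ = ∑ l', (∑ k, z l' k * A l k) * (x l' i * y l' j) := by
          refine Finset.sum_congr rfl fun l' _ => ?_
          rw [Finset.sum_mul]
          exact Finset.sum_congr rfl fun k _ => by ring
      _ = ∑ l', (Pi.single l' 1 : Fin r → ℂ) l * (x l' i * y l' j) := by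
          exact Finset.sum_congr rfl fun l' _ => by rw [hdual]
      _ = x l i * y l j := by
          rw [Finset.sum_eq_single l]
          · simp
          · intro l' _ hl'
            simp [Pi.single_apply, (Ne.symm hl' : l ≠ l')]
          · simp
  have hXmem : ∀ l, X l ∈ span ℂ (Set.range slice) := by
    intro l
    rw [hXslice l]
    exact sum_mem fun k _ => smul_mem _ _ (subset_span ⟨k, rfl⟩)
  have hsliceY : ∀ k, slice k ∈ span ℂ (Set.range Y) := by
    intro k
    have hs : slice k = ∑ l, c l k • Y l := by
      ext i j
      have : (∑ l, c l k • Y l) i j = ∑ l, c l k * (a l i * b l j) := by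
        simp [hY, Matrix.sum_apply, Matrix.vecMulVec_apply]
      rw [this]
      show T i j k = _
      rw [hdec']
      exact Finset.sum_congr rfl fun l _ => by ring
    rw [hs]
    exact sum_mem fun l _ => smul_mem _ _ (subset_span ⟨l, rfl⟩)
  have hle : span ℂ (Set.range X) ≤ span ℂ (Set.range Y) := by
    rw [span_le]
    rintro _ ⟨l, rfl⟩
    exact span_le.mpr (Set.range_subset_iff.mpr hsliceY) (hXmem l)
  have h1 : Module.finrank ℂ (span ℂ (Set.range X)) = r := by
    rw [finrank_span_eq_card hxy, Fintype.card_fin]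
  have h2 : Module.finrank ℂ (span ℂ (Set.range Y)) ≤ r' := by
    simpa [Set.finrank] using finrank_range_le_card (R := ℂ) Y
  calc r = Module.finrank ℂ (span ℂ (Set.range X)) := h1.symm
    _ ≤ Module.finrank ℂ (span ℂ (Set.range Y)) := Submodule.finrank_mono hle
    _ ≤ r' := h2

/-- If `T = Σ x_l ⊗ y_l ⊗ z_l` with the matrices `x_l ⊗ y_l` linearly independent
and the vectors `z_l` linearly independent, then `rank T = r`. -/
theorem rank3_of_linearIndependent {m n p r : ℕ} (T : Fin m → Fin n → Fin p → ℂ)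
    (x : Fin r → Fin m → ℂ) (y : Fin r → Fin n → ℂ) (z : Fin r → Fin p → ℂ)
    (hdec : ∀ i j k, T i j k = ∑ l, x l i * y l j * z l k)
    (hxy : LinearIndependent ℂ (fun l : Fin r => Matrix.vecMulVec (x l) (y l)))
    (hz : LinearIndependent ℂ z) :
    rank3 T = r := by
  have hmem : r ∈ {r : ℕ | ∃ (x : Fin r → Fin m → ℂ) (y : Fin r → Fin n → ℂ)
      (z : Fin r → Fin p → ℂ), ∀ i j k, T i j k = ∑ l, x l i * y l j * z l k} :=
    ⟨x, y, z, hdec⟩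
  have hub : rank3 T ≤ r := Nat.sInf_le hmem
  have hmem' := Nat.sInf_mem (⟨r, hmem⟩ : Set.Nonempty _)
  obtain ⟨a, b, c, hdec'⟩ := hmem'
  exact le_antisymm hub (rank3_aux_lower T x y z hdec hxy hz a b c hdec')
end

section
/- The 2×2×2 tensor W = e₁⊗e₁⊗e₂ + e₁⊗e₂⊗e₁ + e₂⊗e₁⊗e₁ has tensor rank 3. -/
/-- The `W` state `e₁⊗e₁⊗e₂ + e₁⊗e₂⊗e₁ + e₂⊗e₁⊗e₁ ∈ ℂ²⊗ℂ²⊗ℂ²`. -/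
noncomputable def Wstate : Fin 2 → Fin 2 → Fin 2 → ℂ := fun i j k =>
  (if i = 0 ∧ j = 0 ∧ k = 1 then 1 else 0) +
  (if i = 0 ∧ j = 1 ∧ k = 0 then 1 else 0) +
  (if i = 1 ∧ j = 0 ∧ k = 0 then 1 else 0)

/-! Contracting the first mode of `W` with `(s, t)` gives `!![t, s; s, 0]`, of determinant `-s²`.
For a decomposition `W = ∑_{l<2} x_l ⊗ y_l ⊗ z_l` the same contraction is
`Yᵀ * diagonal (⟪x_l, (s, t)⟫) * Z`, of determinant `κ * ⟪x_0, (s, t)⟫ * ⟪x_1, (s, t)⟫`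
with `κ = det Y * det Z`. Comparing the coefficients of `s²`, `t²` and `st` forces the second
coordinates of `x_0` and `x_1` to vanish, so the slice `W 1` would be zero. -/

open Matrix

section Decomposition

variable {R : Type*} [CommSemiring R] {m n p : ℕ}

def HasCPDecomp (T : Fin m → Fin n → Fin p → R) (r : ℕ) : Prop :=
  ∃ (x : Fin r → Fin m → R) (y : Fin r → Fin n → R) (z : Fin r → Fin p → R),
    ∀ i j k, T i j k = ∑ l, x l i * y l j * z l k

theorem HasCPDecomp.succ {T : Fin m → Fin n → Fin p → R} {r : ℕ} (h : HasCPDecomp T r) :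
    HasCPDecomp T (r + 1) := by
  obtain ⟨x, y, z, hT⟩ := h
  exact ⟨Fin.snoc x 0, Fin.snoc y 0, Fin.snoc z 0, by simp [Fin.sum_univ_castSucc, hT]⟩

theorem HasCPDecomp.mono {T : Fin m → Fin n → Fin p → R} {r s : ℕ}
    (h : HasCPDecomp T r) (hrs : r ≤ s) : HasCPDecomp T s := by
  induction s, hrs using Nat.le_induction with
  | base => exact h
  | succ s _ ih => exact ih.succ

theorem rank3_eq_succ_iff {T : Fin m → Fin n → Fin p → ℂ} {r : ℕ} :
    rank3 T = r + 1 ↔ HasCPDecomp T (r + 1) ∧ ¬ HasCPDecomp T r :=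
  Nat.sInf_upward_closed_eq_succ_iff (fun _ _ hle (h : HasCPDecomp T _) => h.mono hle) r

theorem slice_contraction_eq {T : Fin m → Fin n → Fin p → R} {r : ℕ} {x : Fin r → Fin m → R}
    {y : Fin r → Fin n → R} {z : Fin r → Fin p → R}
    (hT : ∀ i j k, T i j k = ∑ l, x l i * y l j * z l k) (w : Fin m → R) :
    of (fun j k => ∑ i, w i * T i j k) = (of y)ᵀ * diagonal (of x *ᵥ w) * of z := by
  ext j k
  rw [mul_apply]
  simp only [hT, of_apply, mul_diagonal, transpose_apply, mulVec, dotProduct,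
    Finset.mul_sum, Finset.sum_mul]
  rw [Finset.sum_comm]
  exact Finset.sum_congr rfl fun _ _ => Finset.sum_congr rfl fun _ _ => by ring

end Decomposition

theorem det_slice_contraction {R : Type*} [CommRing R] {n : ℕ} {T : Fin n → Fin n → Fin n → R}
    {x y z : Fin n → Fin n → R}
    (hT : ∀ i j k, T i j k = ∑ l, x l i * y l j * z l k) (w : Fin n → R) :
    det (of fun j k => ∑ i, w i * T i j k) = det (of y) * det (of z) * ∏ l, (of x *ᵥ w) l := by
  rw [slice_contraction_eq hT, det_mul, det_mul, det_transpose, det_diagonal]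
  ring

theorem det_Wstate_contraction (s t : ℂ) :
    det (of fun j k => ∑ i, ![s, t] i * Wstate i j k) = -s ^ 2 := by
  simp [det_fin_two, Fin.sum_univ_two, Wstate]
  ring

theorem Wstate_not_hasCPDecomp_two : ¬ HasCPDecomp Wstate 2 := by
  rintro ⟨x, y, z, hW⟩
  set κ := det (of y) * det (of z)
  have hdet (s t : ℂ) : -s ^ 2 = κ * ((s * x 0 0 + t * x 0 1) * (s * x 1 0 + t * x 1 1)) := by
    rw [← det_Wstate_contraction s t, det_slice_contraction hW]
    simp only [Fin.prod_univ_two, mulVec, dotProduct, Fin.sum_univ_two, of_apply,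
      cons_val_zero, cons_val_one]
    ring
  have h10 : κ * (x 0 0 * x 1 0) = -1 := by linear_combination -hdet 1 0
  have h01 : κ * (x 0 1 * x 1 1) = 0 := by linear_combination -hdet 0 1
  have hcross : κ * (x 0 0 * x 1 1 + x 0 1 * x 1 0) = 0 := by
    linear_combination hdet 1 0 + hdet 0 1 - hdet 1 1
  have hc : x 0 1 ^ 2 = 0 := by
    linear_combination x 0 1 ^ 2 * h10 - x 0 0 * x 0 1 * hcross + x 0 0 ^ 2 * h01
  have hd : x 1 1 ^ 2 = 0 := by
    linear_combination x 1 1 ^ 2 * h10 - x 1 0 * x 1 1 * hcross + x 1 0 ^ 2 * h01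
  have h100 := hW 1 0 0
  simp [Wstate, Fin.sum_univ_two, pow_eq_zero_iff two_ne_zero |>.mp hc,
    pow_eq_zero_iff two_ne_zero |>.mp hd] at h100

theorem Wstate_hasCPDecomp_three : HasCPDecomp Wstate 3 :=
  ⟨![![1, 0], ![1, 0], ![0, 1]], ![![1, 0], ![0, 1], ![1, 0]], ![![0, 1], ![1, 0], ![1, 0]],
    fun i j k => by
      fin_cases i <;> fin_cases j <;> fin_cases k <;> simp [Wstate, Fin.sum_univ_three]⟩

/-- The `W` state has tensor rank 3. -/
theorem rank3_Wstate : rank3 Wstate = 3 :=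
  rank3_eq_succ_iff.mpr ⟨Wstate_hasCPDecomp_three, Wstate_not_hasCPDecomp_two⟩
end
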